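/- Let p ≥ 1 be an integer, let v : ℂ → ℝ be smooth and strictly positive, and let φ₁, φ₂ : ℂ → ℂ be test functions that agree on some neighborhood of 0. For i = 1, 2 let ε_i > 0 and let F_i be analytic on {λ ∈ ℂ : Re λ > −ε_i} with F_i(λ) = λ · ∫_ℂ v(s)^λ · (|s|²)^λ · ( ∂̄v(s)/v(s) + 1/conj(s) ) · s^{-p} · φ_i(s) dA(s) for all real λ > p (integrand 0 at s = 0). Then F₁(0) = F₂(0); that is, the value at λ = 0 of the analytic continuation of ∫ ∂̄(v^λ|s|^{2λ}) ∧ φ ds/s^p depends only on the germ of φ at the origin. -/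

import Mathlib

open MeasureTheory Complex

/-- The antiholomorphic Wirtinger derivative `∂̄g(s) = (1/2)(Dg(s)(1) + i·Dg(s)(i))`
of a function `g : ℂ → ℂ`, computed from its real Fréchet derivative. -/
noncomputable def dbar (g : ℂ → ℂ) (s : ℂ) : ℂ :=
  (1 / 2) * (fderiv ℝ g s 1 + Complex.I * fderiv ℝ g s Complex.I)

/-- The integrand `v(s)^λ (|s|²)^λ (∂̄v(s)/v(s) + 1/conj s) s^{-p} φ(s)`,
taken to be `0` at `s = 0`. -/
noncomputable def resIntegrand (p : ℕ) (v : ℂ → ℝ) (φ : ℂ → ℂ) (lam : ℂ) (s : ℂ) : ℂ :=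
  if s = 0 then 0 else
    (v s : ℂ) ^ lam * ((‖s‖ ^ 2 : ℝ) : ℂ) ^ lam *
      (dbar (fun z => (v z : ℂ)) s / (v s : ℂ) + 1 / (starRingEnd ℂ) s) *
      s ^ (-(p : ℤ)) * φ s

/-- The `λ`-independent factor of the integrand. -/
noncomputable def resC (p : ℕ) (v : ℂ → ℝ) (ψ : ℂ → ℂ) (s : ℂ) : ℂ :=
  (dbar (fun z => (v z : ℂ)) s / (v s : ℂ) + 1 / (starRingEnd ℂ) s) * s ^ (-(p : ℤ)) * ψ s

/-- The exponent factor. -/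
noncomputable def resA (v : ℂ → ℝ) (s : ℂ) : ℝ := Real.log (v s * ‖s‖ ^ 2)

lemma resIntegrand_eq_exp (p : ℕ) (v : ℂ → ℝ) (ψ : ℂ → ℂ) (hvpos : ∀ s, 0 < v s)
    (lam : ℂ) {s : ℂ} (hs : s ≠ 0) :
    resIntegrand p v ψ lam s = Complex.exp (lam * (resA v s : ℂ)) * resC p v ψ s := by
  have hv0 : ((v s : ℝ) : ℂ) ≠ 0 := Complex.ofReal_ne_zero.2 (hvpos s).ne'
  have habs : (0:ℝ) < ‖s‖ ^ 2 := pow_pos (norm_pos_iff.mpr hs) 2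
  have ha0 : ((‖s‖ ^ 2 : ℝ) : ℂ) ≠ 0 := Complex.ofReal_ne_zero.2 habs.ne'
  rw [resIntegrand, if_neg hs, cpow_def_of_ne_zero hv0, cpow_def_of_ne_zero ha0,
    ← Complex.ofReal_log (hvpos s).le, ← Complex.ofReal_log habs.le, ← Complex.exp_add]
  have : (Real.log (v s) : ℂ) * lam + (Real.log (‖s‖ ^ 2) : ℂ) * lam
      = lam * (resA v s : ℂ) := by
    rw [resA, Real.log_mul (hvpos s).ne' habs.ne']
    push_cast
    ring
  rw [this, resC]
  ring

lemma cont_dbar (v : ℂ → ℝ) (hv : ContDiff ℝ (⊤ : ℕ∞) v) :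
    Continuous (dbar (fun z => (v z : ℂ))) := by
  have hg : ContDiff ℝ (⊤ : ℕ∞) (fun z => (v z : ℂ)) := Complex.ofRealCLM.contDiff.comp hv
  have hfd : Continuous (fun s => fderiv ℝ (fun z => (v z : ℂ)) s) :=
    hg.continuous_fderiv (by simp)
  unfold dbar
  exact continuous_const.mul ((hfd.clm_apply continuous_const).add
    (continuous_const.mul (hfd.clm_apply continuous_const)))

lemma contOn_resC (p : ℕ) (v : ℂ → ℝ) (ψ : ℂ → ℂ) (hv : ContDiff ℝ (⊤ : ℕ∞) v)
    (hψ : Continuous ψ) (hvpos : ∀ s, 0 < v s) :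
    ContinuousOn (resC p v ψ) {s : ℂ | s ≠ 0} := by
  apply ContinuousOn.mul
  apply ContinuousOn.mul
  · apply ContinuousOn.add
    · exact (cont_dbar v hv).continuousOn.div
        ((Complex.continuous_ofReal.comp hv.continuous).continuousOn)
        (fun s hs => Complex.ofReal_ne_zero.2 (hvpos s).ne')
    · exact continuousOn_const.div (Complex.continuous_conj.continuousOn)
        (fun s hs => by simpa using hs)
  · exact fun s hs => (continuousAt_zpow₀ _ _ (Or.inl hs)).continuousWithinAt
  · exact hψ.continuousOn

lemma contOn_resA (v : ℂ → ℝ) (hv : ContDiff ℝ (⊤ : ℕ∞) v) (hvpos : ∀ s, 0 < v s) :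
    ContinuousOn (resA v) {s : ℂ | s ≠ 0} := by
  apply Real.continuousOn_log.comp
    ((hv.continuous.mul ((continuous_norm.pow 2))).continuousOn)
  intro s hs
  simp only [Set.mem_compl_iff, Set.mem_singleton_iff]
  exact (mul_pos (hvpos s) (pow_pos (norm_pos_iff.mpr hs) 2)).ne'

lemma contOn_exp_form (p : ℕ) (v : ℂ → ℝ) (ψ : ℂ → ℂ) (hv : ContDiff ℝ (⊤ : ℕ∞) v)
    (hψ : Continuous ψ) (hvpos : ∀ s, 0 < v s) (lam : ℂ) :
    ContinuousOn (fun s => Complex.exp (lam * (resA v s : ℂ)) * resC p v ψ s)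
      {s : ℂ | s ≠ 0} :=
  (Complex.continuous_exp.comp_continuousOn (continuousOn_const.mul
    (Complex.continuous_ofReal.comp_continuousOn (contOn_resA v hv hvpos)))).mul
    (contOn_resC p v ψ hv hψ hvpos)

lemma cont_resIntegrand (p : ℕ) (v : ℂ → ℝ) (ψ : ℂ → ℂ) (hv : ContDiff ℝ (⊤ : ℕ∞) v)
    (hψ : Continuous ψ) (hvpos : ∀ s, 0 < v s) {r : ℝ} (hr : 0 < r)
    (hzero : ∀ s ∈ Metric.ball (0:ℂ) r, ψ s = 0) (lam : ℂ) :
    Continuous (resIntegrand p v ψ lam) := by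
  rw [continuous_iff_continuousAt]
  intro s₀
  by_cases h0 : s₀ = 0
  · subst h0
    have hev : ∀ᶠ s in nhds (0:ℂ), resIntegrand p v ψ lam s = 0 := by
      filter_upwards [Metric.ball_mem_nhds (0:ℂ) hr] with s hs
      rw [resIntegrand]
      split_ifs with h
      · rfl
      · rw [hzero s hs, mul_zero]
    exact (continuousAt_const (y := (0:ℂ))).congr (by filter_upwards [hev] with s h using h.symm)
  · have hopen : IsOpen {s : ℂ | s ≠ 0} := isOpen_compl_singleton
    refine ((contOn_exp_form p v ψ hv hψ hvpos lam).continuousAt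
      (hopen.mem_nhds h0)).congr ?_
    filter_upwards [hopen.mem_nhds h0] with s hs
    exact (resIntegrand_eq_exp p v ψ hvpos lam hs).symm

lemma integrable_resIntegrand (p : ℕ) (v : ℂ → ℝ) (ψ : ℂ → ℂ) (hv : ContDiff ℝ (⊤ : ℕ∞) v)
    (hψ : Continuous ψ) (hψc : HasCompactSupport ψ) (hvpos : ∀ s, 0 < v s) {r : ℝ}
    (hr : 0 < r) (hzero : ∀ s ∈ Metric.ball (0:ℂ) r, ψ s = 0) (lam : ℂ) :
    Integrable (resIntegrand p v ψ lam) := by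
  apply (cont_resIntegrand p v ψ hv hψ hvpos hr hzero lam).integrable_of_hasCompactSupport
  apply hψc.mono
  intro s hs
  simp only [Function.mem_support] at hs ⊢
  contrapose! hs
  rw [resIntegrand]
  split_ifs with h
  · rfl
  · rw [hs, mul_zero]

lemma resIntegrand_zero_of_psi_zero (p : ℕ) (v : ℂ → ℝ) (ψ : ℂ → ℂ) (lam : ℂ) {s : ℂ}
    (h : ψ s = 0) : resIntegrand p v ψ lam s = 0 := by
  rw [resIntegrand]
  split_ifs with h0
  · rfl
  · rw [h, mul_zero]

lemma diff_G (p : ℕ) (v : ℂ → ℝ) (ψ : ℂ → ℂ) (hv : ContDiff ℝ (⊤ : ℕ∞) v)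
    (hψ : Continuous ψ) (hψc : HasCompactSupport ψ) (hvpos : ∀ s, 0 < v s) {r : ℝ}
    (hr : 0 < r) (hzero : ∀ s ∈ Metric.ball (0:ℂ) r, ψ s = 0) :
    Differentiable ℂ (fun lam : ℂ => ∫ s : ℂ, resIntegrand p v ψ lam s) := by
  intro lam₀
  set K := tsupport ψ with hKdef
  have hK : IsCompact K := hψc
  have hsuppK : Function.support ψ ⊆ K := subset_tsupport ψ
  have hKne : K ⊆ {s : ℂ | s ≠ 0} := by
    have h1 : Function.support ψ ⊆ (Metric.ball (0:ℂ) r)ᶜ := by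
      intro s hs
      simp only [Set.mem_compl_iff]
      exact fun hb => hs (hzero s hb)
    have h2 : K ⊆ (Metric.ball (0:ℂ) r)ᶜ :=
      closure_minimal h1 Metric.isOpen_ball.isClosed_compl
    intro s hs hs0
    exact (h2 hs) (by rw [hs0]; exact Metric.mem_ball_self hr)
  obtain ⟨C₁, hC₁⟩ := hK.exists_bound_of_continuousOn ((contOn_resA v hv hvpos).mono hKne)
  obtain ⟨C₂, hC₂⟩ := hK.exists_bound_of_continuousOn ((contOn_resC p v ψ hv hψ hvpos).mono hKne)
  set C₁' : ℝ := max C₁ 0 with hC₁'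
  set C₂' : ℝ := max C₂ 0 with hC₂'
  have hC₁0 : 0 ≤ C₁' := le_max_right _ _
  have hC₂0 : 0 ≤ C₂' := le_max_right _ _
  set R : ℝ := ‖lam₀‖ + 1 with hR
  have hR0 : 0 ≤ R := by positivity
  set B : ℝ := C₁' * (Real.exp (R * C₁') * C₂') with hB
  have hB0 : 0 ≤ B := by positivity
  set bound : ℂ → ℝ := K.indicator (fun _ => B) with hbound
  set F' : ℂ → ℂ → ℂ := fun lam s => (resA v s : ℂ) * resIntegrand p v ψ lam s with hF'
  -- norm estimate of resIntegrand for lam in the ball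
  have hest : ∀ lam ∈ Metric.ball lam₀ 1, ∀ s : ℂ, ‖F' lam s‖ ≤ bound s := by
    intro lam hlam s
    by_cases hψs : ψ s = 0
    · rw [hF']
      simp only [resIntegrand_zero_of_psi_zero p v ψ lam hψs, mul_zero, norm_zero]
      exact Set.indicator_apply_nonneg (fun _ => hB0)
    · have hsK : s ∈ K := hsuppK hψs
      have hs0 : s ≠ 0 := hKne hsK
      have hre : |lam.re| ≤ R := by
        calc |lam.re| ≤ ‖lam‖ := Complex.abs_re_le_norm lam
        _ ≤ ‖lam₀‖ + 1 := by
            have : ‖lam - lam₀‖ < 1 := by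
              have := Metric.mem_ball.1 hlam
              rwa [dist_eq_norm] at this
            calc ‖lam‖ = ‖lam₀ + (lam - lam₀)‖ := by ring_nf
            _ ≤ ‖lam₀‖ + ‖lam - lam₀‖ := norm_add_le _ _
            _ ≤ ‖lam₀‖ + 1 := by linarith
      have haC : |resA v s| ≤ C₁' := le_trans (hC₁ s hsK) (le_max_left _ _)
      have hcC : ‖resC p v ψ s‖ ≤ C₂' := le_trans (hC₂ s hsK) (le_max_left _ _)
      show ‖(resA v s : ℂ) * resIntegrand p v ψ lam s‖ ≤ bound s
      rw [resIntegrand_eq_exp p v ψ hvpos lam hs0]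
      have hbs : bound s = B := by rw [hbound, Set.indicator_of_mem hsK]
      rw [hbs, hB]
      have hexp : ‖Complex.exp (lam * (resA v s : ℂ))‖ ≤ Real.exp (R * C₁') := by
        rw [Complex.norm_exp]
        apply Real.exp_le_exp.2
        have : (lam * (resA v s : ℂ)).re = lam.re * resA v s := by
          simp [Complex.mul_re]
        rw [this]
        calc lam.re * resA v s ≤ |lam.re * resA v s| := le_abs_self _
        _ = |lam.re| * |resA v s| := abs_mul _ _
        _ ≤ R * C₁' := mul_le_mul hre haC (abs_nonneg _) hR0
      calc ‖(resA v s : ℂ) * (Complex.exp (lam * (resA v s : ℂ)) * resC p v ψ s)‖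
          = |resA v s| * (‖Complex.exp (lam * (resA v s : ℂ))‖ * ‖resC p v ψ s‖) := by
            simp [norm_mul, Complex.norm_real, Real.norm_eq_abs]
        _ ≤ C₁' * (Real.exp (R * C₁') * C₂') := by
            apply mul_le_mul haC _ (by positivity) hC₁0
            exact mul_le_mul hexp hcC (norm_nonneg _) (Real.exp_pos _).le
  have main := hasDerivAt_integral_of_dominated_loc_of_deriv_le (μ := volume)
    (F := fun lam s => resIntegrand p v ψ lam s) (F' := F') (x₀ := lam₀)
    (bound := bound) (Metric.ball_mem_nhds lam₀ one_pos)
    (Filter.Eventually.of_forall fun lam =>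
      (cont_resIntegrand p v ψ hv hψ hvpos hr hzero lam).aestronglyMeasurable)
    (integrable_resIntegrand p v ψ hv hψ hψc hvpos hr hzero lam₀)
    ?_ (Filter.Eventually.of_forall fun s lam hlam => hest lam hlam s) ?_
    (Filter.Eventually.of_forall ?_)
  · exact main.2.differentiableAt
  · -- measurability of F' lam₀
    have hmA : Measurable (fun s => ((resA v s : ℝ) : ℂ)) :=
      Complex.measurable_ofReal.comp (Real.measurable_log.comp
        ((hv.continuous.mul (continuous_norm.pow 2)).measurable))
    exact (hmA.mul (cont_resIntegrand p v ψ hv hψ hvpos hr hzero lam₀).measurable).aestronglyMeasurable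
  · rw [hbound]
    rw [integrable_indicator_iff hK.measurableSet]
    exact integrableOn_const hK.measure_lt_top.ne
  · -- h_diff
    intro s lam hlam
    by_cases hψs : ψ s = 0
    · have hz : (fun lam : ℂ => resIntegrand p v ψ lam s) = fun _ => 0 := by
        funext l; exact resIntegrand_zero_of_psi_zero p v ψ l hψs
      rw [hF']
      simp only [resIntegrand_zero_of_psi_zero p v ψ lam hψs, mul_zero]
      rw [hz]
      exact hasDerivAt_const _ _
    · have hs0 : s ≠ 0 := hKne (hsuppK hψs)
      have heq : (fun lam : ℂ => resIntegrand p v ψ lam s)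
          = fun lam => Complex.exp (lam * (resA v s : ℂ)) * resC p v ψ s := by
        funext l; exact resIntegrand_eq_exp p v ψ hvpos l hs0
      show HasDerivAt (fun lam : ℂ => resIntegrand p v ψ lam s)
        ((resA v s : ℂ) * resIntegrand p v ψ lam s) lam
      rw [resIntegrand_eq_exp p v ψ hvpos lam hs0, heq]
      have h1 : HasDerivAt (fun l : ℂ => l * (resA v s : ℂ)) (resA v s : ℂ) lam := by
        simpa using (hasDerivAt_id lam).mul_const ((resA v s : ℝ) : ℂ)
      have h2 := (h1.cexp).mul_const (resC p v ψ s)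
      refine h2.congr_deriv ?_
      ring

lemma resIntegrand_eq_ite (p : ℕ) (v : ℂ → ℝ) (φ : ℂ → ℂ) (hvpos : ∀ s, 0 < v s) (lam : ℂ) :
    resIntegrand p v φ lam = fun s =>
      if s = 0 then 0 else Complex.exp (lam * (resA v s : ℂ)) * resC p v φ s := by
  funext s
  by_cases h : s = 0
  · simp [resIntegrand, h]
  · rw [if_neg h]; exact resIntegrand_eq_exp p v φ hvpos lam h

lemma measurable_resIntegrand (p : ℕ) (v : ℂ → ℝ) (φ : ℂ → ℂ) (hv : ContDiff ℝ (⊤ : ℕ∞) v)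
    (hφ : Continuous φ) (hvpos : ∀ s, 0 < v s) (lam : ℂ) :
    Measurable (resIntegrand p v φ lam) := by
  rw [resIntegrand_eq_ite p v φ hvpos lam]
  have h0 : MeasurableSet {s : ℂ | s = 0} := by
    simpa using measurableSet_singleton (0 : ℂ)
  apply Measurable.ite h0 measurable_const
  have hA : Measurable (fun s => ((resA v s : ℝ) : ℂ)) :=
    Complex.measurable_ofReal.comp (Real.measurable_log.comp
      ((hv.continuous.mul (continuous_norm.pow 2)).measurable))
  have hexp : Measurable (fun s => Complex.exp (lam * (resA v s : ℂ))) :=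
    Complex.measurable_exp.comp (measurable_const.mul hA)
  apply hexp.mul
  unfold resC
  have hzpow : Measurable (fun s : ℂ => s ^ (-(p : ℤ))) := by
    have : (fun s : ℂ => s ^ (-(p : ℤ))) = fun s : ℂ => (s ^ p)⁻¹ := by
      funext s; rw [zpow_neg, zpow_natCast]
    rw [this]
    exact (measurable_id.pow_const p).inv
  exact ((((cont_dbar v hv).measurable.div
      ((Complex.continuous_ofReal.comp hv.continuous).measurable)).add
    (measurable_const.div (Complex.continuous_conj.measurable))).mul hzpow).mul hφ.measurable

lemma integrable_resIntegrand_of_lt (p : ℕ) (hp : 1 ≤ p) (v : ℂ → ℝ) (hv : ContDiff ℝ (⊤ : ℕ∞) v)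
    (hvpos : ∀ s, 0 < v s) (φ : ℂ → ℂ) (hφ : Continuous φ) (hφc : HasCompactSupport φ)
    {l : ℝ} (hl : (p : ℝ) < l) : Integrable (resIntegrand p v φ (l : ℂ)) := by
  set K := tsupport φ with hKdef
  have hK : IsCompact K := hφc
  have hl0 : (0:ℝ) ≤ l := le_trans (by positivity) hl.le
  have hp1 : (1:ℝ) ≤ (p:ℝ) := by exact_mod_cast hp
  have h2lp : (0:ℝ) ≤ 2 * l - p := by linarith
  have h2lp1 : (0:ℝ) ≤ 2 * l - p - 1 := by linarith
  -- bounds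
  obtain ⟨Cv, hCv⟩ := hK.exists_bound_of_continuousOn hv.continuous.continuousOn
  set Cv' : ℝ := max Cv 1 with hCv'
  have hCv'1 : (1:ℝ) ≤ Cv' := le_max_right _ _
  have hCv'0 : (0:ℝ) < Cv' := lt_of_lt_of_le one_pos hCv'1
  have hDcont : Continuous (fun s => dbar (fun z => (v z : ℂ)) s / ((v s : ℝ) : ℂ)) :=
    (cont_dbar v hv).div (Complex.continuous_ofReal.comp hv.continuous)
      (fun s => Complex.ofReal_ne_zero.2 (hvpos s).ne')
  obtain ⟨CD, hCD⟩ := hK.exists_bound_of_continuousOn hDcont.continuousOn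
  set CD' : ℝ := max CD 0 with hCD'
  have hCD'0 : (0:ℝ) ≤ CD' := le_max_right _ _
  obtain ⟨Cφ, hCφ⟩ := hK.exists_bound_of_continuousOn hφ.continuousOn
  set Cφ' : ℝ := max Cφ 0 with hCφ'
  have hCφ'0 : (0:ℝ) ≤ Cφ' := le_max_right _ _
  obtain ⟨R, hR⟩ := hK.isBounded.subset_closedBall (0 : ℂ)
  set Rm : ℝ := max R 1 with hRm
  have hRm1 : (1:ℝ) ≤ Rm := le_max_right _ _
  have hRm0 : (0:ℝ) < Rm := lt_of_lt_of_le one_pos hRm1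
  set C : ℝ := Cv' ^ l * (Rm ^ (2 * l - p) * CD' + Rm ^ (2 * l - p - 1)) * Cφ' with hCdef
  have hC0 : 0 ≤ C := by positivity
  apply Integrable.mono' (g := K.indicator fun _ => C)
  · rw [integrable_indicator_iff hK.measurableSet]
    exact integrableOn_const hK.measure_lt_top.ne
  · exact (measurable_resIntegrand p v φ hv hφ hvpos (l : ℂ)).aestronglyMeasurable
  · apply Filter.Eventually.of_forall
    intro s
    by_cases hsK : s ∈ K
    · rw [Set.indicator_of_mem hsK]
      by_cases hs0 : s = 0
      · simpa [resIntegrand, hs0] using hC0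
      · rw [resIntegrand, if_neg hs0]
        have habs : 0 < ‖s‖ := norm_pos_iff.mpr hs0
        have hsR : ‖s‖ ≤ Rm := by
          have := hR hsK
          rw [Metric.mem_closedBall, dist_zero_right] at this
          exact le_trans this (le_max_left _ _)
        have h1 : ‖((v s : ℝ) : ℂ) ^ (l : ℂ)‖ = v s ^ l := by
          rw [Complex.norm_cpow_eq_rpow_re_of_pos (hvpos s),
            Complex.ofReal_re]
        have h2 : ‖((‖s‖ ^ 2 : ℝ) : ℂ) ^ (l : ℂ)‖ = ‖s‖ ^ (2 * l) := by
          rw [Complex.norm_cpow_eq_rpow_re_of_pos (pow_pos habs 2),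
            Complex.ofReal_re, ← Real.rpow_natCast (‖s‖) 2,
            ← Real.rpow_mul habs.le]
          norm_num
        have h4 : ‖s ^ (-(p : ℤ))‖ = ‖s‖ ^ (-(p : ℝ)) := by
          rw [norm_zpow,
            ← Real.rpow_intCast (‖s‖) (-(p : ℤ))]
          push_cast
          ring_nf
        have hD : ‖dbar (fun z => ((v z : ℝ) : ℂ)) s / ((v s : ℝ) : ℂ) + 1 / (starRingEnd ℂ) s‖
            ≤ CD' + (‖s‖)⁻¹ := by
          refine le_trans (norm_add_le _ _) (add_le_add
            (le_trans (hCD s hsK) (le_max_left _ _)) ?_)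
          have : ‖1 / (starRingEnd ℂ) s‖ = (‖s‖)⁻¹ := by
            rw [one_div, norm_inv, RCLike.norm_conj]
          rw [this]
        calc ‖((v s : ℝ) : ℂ) ^ (l:ℂ) * ((‖s‖ ^ 2 : ℝ) : ℂ) ^ (l:ℂ) *
              (dbar (fun z => ((v z : ℝ) : ℂ)) s / ((v s : ℝ) : ℂ) + 1 / (starRingEnd ℂ) s) *
              s ^ (-(p : ℤ)) * φ s‖
            = v s ^ l * ((‖s‖ ^ (2 * l) *
                ‖dbar (fun z => ((v z : ℝ) : ℂ)) s / ((v s : ℝ) : ℂ) + 1 / (starRingEnd ℂ) s‖ *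
                ‖s‖ ^ (-(p : ℝ)))) * ‖φ s‖ := by
              rw [norm_mul, norm_mul, norm_mul, norm_mul, h1, h2, h4]
              ring
          _ ≤ Cv' ^ l * (Rm ^ (2 * l - p) * CD' + Rm ^ (2 * l - p - 1)) * Cφ' := by
              have e1 : v s ^ l ≤ Cv' ^ l := by
                apply Real.rpow_le_rpow (hvpos s).le _ hl0
                exact le_trans (le_trans (le_abs_self _) (hCv s hsK)) (le_max_left _ _)
              have e3 : ‖φ s‖ ≤ Cφ' := le_trans (hCφ s hsK) (le_max_left _ _)
              have e2 : ‖s‖ ^ (2 * l) *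
                  ‖dbar (fun z => ((v z : ℝ) : ℂ)) s / ((v s : ℝ) : ℂ) + 1 / (starRingEnd ℂ) s‖ *
                  ‖s‖ ^ (-(p : ℝ))
                  ≤ Rm ^ (2 * l - p) * CD' + Rm ^ (2 * l - p - 1) := by
                have he : ‖s‖ ^ (2*l) * ‖s‖ ^ (-(p:ℝ))
                    = ‖s‖ ^ (2*l - p) := by
                  rw [← Real.rpow_add habs]; ring_nf
                calc ‖s‖ ^ (2 * l) * ‖_ + _‖ * ‖s‖ ^ (-(p : ℝ))
                    ≤ ‖s‖ ^ (2 * l) * (CD' + (‖s‖)⁻¹) *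
                      ‖s‖ ^ (-(p : ℝ)) := by
                      apply mul_le_mul_of_nonneg_right _ (Real.rpow_nonneg habs.le _)
                      exact mul_le_mul_of_nonneg_left hD (Real.rpow_nonneg habs.le _)
                  _ = ‖s‖ ^ (2*l - p) * CD' + ‖s‖ ^ (2*l - p - 1) := by
                      rw [show (‖s‖)⁻¹ = ‖s‖ ^ (-1:ℝ) from
                        (Real.rpow_neg_one _).symm,
                        show ‖s‖ ^ (2*l) * (CD' + ‖s‖ ^ (-1:ℝ)) *
                            ‖s‖ ^ (-(p:ℝ))
                          = (‖s‖ ^ (2*l) * ‖s‖ ^ (-(p:ℝ))) * CD'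
                            + (‖s‖ ^ (2*l) * ‖s‖ ^ (-(p:ℝ))) *
                              ‖s‖ ^ (-1:ℝ) from by ring,
                        ← Real.rpow_add habs, ← Real.rpow_add habs]
                      ring_nf
                  _ ≤ Rm ^ (2 * l - p) * CD' + Rm ^ (2 * l - p - 1) := by
                      apply add_le_add
                      · exact mul_le_mul_of_nonneg_right
                          (Real.rpow_le_rpow habs.le hsR h2lp) hCD'0
                      · exact Real.rpow_le_rpow habs.le hsR h2lp1
              have hmidnn : 0 ≤ ‖s‖ ^ (2 * l) *
                  ‖dbar (fun z => ((v z : ℝ) : ℂ)) s / ((v s : ℝ) : ℂ) + 1 / (starRingEnd ℂ) s‖ *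
                  ‖s‖ ^ (-(p : ℝ)) := by positivity
              have hrhsnn : 0 ≤ Rm ^ (2 * l - p) * CD' + Rm ^ (2 * l - p - 1) := by positivity
              exact mul_le_mul (mul_le_mul e1 e2 hmidnn (Real.rpow_nonneg hCv'0.le l))
                e3 (norm_nonneg _) (mul_nonneg (Real.rpow_nonneg hCv'0.le l) hrhsnn)
    · rw [Set.indicator_of_notMem hsK,
        resIntegrand_zero_of_psi_zero p v φ _ (image_eq_zero_of_notMem_tsupport hsK), norm_zero]

/-- The value at `λ = 0` of the analytic continuation of the residue-type integral
`λ ↦ λ·∫ ∂̄(v^λ|s|^{2λ}) ∧ φ ds/s^p` depends only on the germ of the test function `φ`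
at the origin. -/
theorem stmt_4 (p : ℕ) (hp : 1 ≤ p) (v : ℂ → ℝ) (hv : ContDiff ℝ (⊤ : ℕ∞) v)
    (hvpos : ∀ s, 0 < v s)
    (φ₁ φ₂ : ℂ → ℂ) (hφ₁ : ContDiff ℝ (⊤ : ℕ∞) φ₁) (hφ₂ : ContDiff ℝ (⊤ : ℕ∞) φ₂)
    (hφ₁c : HasCompactSupport φ₁) (hφ₂c : HasCompactSupport φ₂)
    (hgerm : ∃ W : Set ℂ, W ∈ nhds (0 : ℂ) ∧ ∀ s ∈ W, φ₁ s = φ₂ s)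
    (ε₁ ε₂ : ℝ) (hε₁ : 0 < ε₁) (hε₂ : 0 < ε₂)
    (F₁ F₂ : ℂ → ℂ)
    (hF₁ : DifferentiableOn ℂ F₁ {lam : ℂ | -ε₁ < lam.re})
    (hF₂ : DifferentiableOn ℂ F₂ {lam : ℂ | -ε₂ < lam.re})
    (hF₁eq : ∀ lam : ℝ, (p : ℝ) < lam →
      F₁ (lam : ℂ) = (lam : ℂ) * ∫ s : ℂ, resIntegrand p v φ₁ (lam : ℂ) s)
    (hF₂eq : ∀ lam : ℝ, (p : ℝ) < lam →
      F₂ (lam : ℂ) = (lam : ℂ) * ∫ s : ℂ, resIntegrand p v φ₂ (lam : ℂ) s) :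
    F₁ 0 = F₂ 0 := by
  obtain ⟨W, hW, hWeq⟩ := hgerm
  obtain ⟨r, hr, hball⟩ := Metric.mem_nhds_iff.1 hW
  set ψ : ℂ → ℂ := fun s => φ₁ s - φ₂ s with hψdef
  have hψ : Continuous ψ := hφ₁.continuous.sub hφ₂.continuous
  have hψc : HasCompactSupport ψ := by
    apply HasCompactSupport.intro (hφ₁c.union hφ₂c)
    intro x hx
    rw [Set.mem_union] at hx
    push_neg at hx
    simp only [hψdef, image_eq_zero_of_notMem_tsupport hx.1,
      image_eq_zero_of_notMem_tsupport hx.2, sub_zero]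
  have hzero : ∀ s ∈ Metric.ball (0:ℂ) r, ψ s = 0 := fun s hs =>
    sub_eq_zero.2 (hWeq s (hball hs))
  set G : ℂ → ℂ := fun lam => ∫ s : ℂ, resIntegrand p v ψ lam s with hG
  have hGd : Differentiable ℂ G := diff_G p v ψ hv hψ hψc hvpos hr hzero
  -- decomposition of the integrand
  have hdec : ∀ (lam : ℂ) (s : ℂ), resIntegrand p v φ₁ lam s
      = resIntegrand p v φ₂ lam s + resIntegrand p v ψ lam s := by
    intro lam s
    rw [resIntegrand, resIntegrand, resIntegrand]
    split_ifs with h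
    · simp
    · simp only [hψdef]
      ring
  have key : ∀ l : ℝ, (p : ℝ) < l →
      (∫ s : ℂ, resIntegrand p v φ₁ (l : ℂ) s)
        = (∫ s : ℂ, resIntegrand p v φ₂ (l : ℂ) s) + G (l : ℂ) := by
    intro l hl
    have h2 := integrable_resIntegrand_of_lt p hp v hv hvpos φ₂ hφ₂.continuous hφ₂c hl
    have hψint := integrable_resIntegrand p v ψ hv hψ hψc hvpos hr hzero (l : ℂ)
    calc (∫ s : ℂ, resIntegrand p v φ₁ (l : ℂ) s)
        = ∫ s : ℂ, (resIntegrand p v φ₂ (l : ℂ) s + resIntegrand p v ψ (l : ℂ) s) := by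
          simp only [hdec]
      _ = (∫ s : ℂ, resIntegrand p v φ₂ (l : ℂ) s) + G (l : ℂ) :=
          integral_add h2 hψint
  -- identity theorem
  set ε : ℝ := min ε₁ ε₂ with hε
  have hε0 : 0 < ε := lt_min hε₁ hε₂
  set S : Set ℂ := {lam : ℂ | -ε < lam.re} with hS
  have hSopen : IsOpen S := isOpen_lt continuous_const Complex.continuous_re
  have hSpre : IsPreconnected S := (convex_halfSpace_re_gt (-ε)).isPreconnected
  set Φ : ℂ → ℂ := fun lam => F₁ lam - F₂ lam - lam * G lam with hΦdef
  have hΦd : DifferentiableOn ℂ Φ S := by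
    apply DifferentiableOn.sub
    apply DifferentiableOn.sub
    · exact hF₁.mono (fun lam h => lt_of_le_of_lt
        (neg_le_neg (min_le_left ε₁ ε₂)) h)
    · exact hF₂.mono (fun lam h => lt_of_le_of_lt
        (neg_le_neg (min_le_right ε₁ ε₂)) h)
    · exact (differentiable_id.mul hGd).differentiableOn
  have hΦa : AnalyticOnNhd ℂ Φ S := hΦd.analyticOnNhd hSopen
  have hz₀S : (((p : ℝ) + 1 : ℝ) : ℂ) ∈ S := by
    simp only [hS, Set.mem_setOf_eq, Complex.ofReal_re]
    have : (0:ℝ) ≤ (p:ℝ) + 1 := by positivity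
    linarith
  have hΦzero : ∀ l : ℝ, (p : ℝ) < l → Φ ((l : ℝ) : ℂ) = 0 := by
    intro l hl
    simp only [hΦdef, hF₁eq l hl, hF₂eq l hl]
    rw [key l hl, hG]
    ring
  have hfreq : ∃ᶠ z in nhdsWithin (((p : ℝ) + 1 : ℝ) : ℂ) {(((p : ℝ) + 1 : ℝ) : ℂ)}ᶜ,
      Φ z = 0 := by
    set u : ℕ → ℂ := fun n => (((p : ℝ) + 1 + 1 / (n + 1) : ℝ) : ℂ) with hu
    have hmono : ∀ n : ℕ, (0:ℝ) < 1 / ((n:ℝ) + 1) := by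
      intro n; positivity
    have htend : Filter.Tendsto u Filter.atTop
        (nhdsWithin (((p : ℝ) + 1 : ℝ) : ℂ) {(((p : ℝ) + 1 : ℝ) : ℂ)}ᶜ) := by
      have h1 : Filter.Tendsto (fun n : ℕ => (p:ℝ) + 1 + 1/((n:ℝ)+1)) Filter.atTop
          (nhds ((p:ℝ)+1)) := by
        have h := tendsto_one_div_add_atTop_nhds_zero_nat.const_add ((p:ℝ)+1)
        simpa using h
      rw [tendsto_nhdsWithin_iff]
      constructor
      · exact (Complex.continuous_ofReal.tendsto _).comp h1
      · apply Filter.Eventually.of_forall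
        intro n
        simp only [Set.mem_compl_iff, Set.mem_singleton_iff, hu]
        intro hcontra
        rw [Complex.ofReal_inj] at hcontra
        have := hmono n
        linarith
    apply htend.frequently
    apply Filter.Frequently.of_forall
    intro n
    apply hΦzero
    have := hmono n
    push_cast
    linarith
  have heq := hΦa.eqOn_zero_of_preconnected_of_frequently_eq_zero hSpre hz₀S hfreq
  have h0S : (0:ℂ) ∈ S := by
    simp only [hS, Set.mem_setOf_eq, Complex.zero_re]
    linarith
  have h0 := heq h0S
  simp only [hΦdef, Pi.zero_apply, zero_mul, sub_zero] at h0
  exact sub_eq_zero.1 h0
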